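/- arXiv:2108.04757 — 3 statements merged into one kernel-verified Lean document; each statement's English description precedes it below -/
import Mathlib

section
/- Let M be a finite rank-4 loopless hypermodular matroid that is non-modular, and let 𝓜 be a modular cut of M. If 𝓜 contains a non-modular pair {T, T'} of rank-2 flats, then 𝓜 contains a non-modular pair {F, L} of flats with r(F) = 3 and r(L) = 2 such that the modular cut generated by {F, L} equals the modular cut generated by {T, T'}; conversely, if 𝓜 contains a non-modular pair {F, L} of flats with r(F) = 3 and r(L) = 2, then 𝓜 contains a non-modular pair {T, T'} of rank-2 flats such that the modular cut generated by {T, T'} equals the modular cut generated by {F, L}. -/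
open Set Matroid
open scoped Matroid

namespace SMC

variable {α : Type*}

/-- The rank of a set `X` in a matroid `M`: the maximum cardinality of an
independent subset of `X` (intended for finite matroids). -/
noncomputable def rk (M : Matroid α) (X : Set α) : ℕ :=
  sSup {n | ∃ I, M.Indep I ∧ I ⊆ X ∧ I.ncard = n}

/-- The rank of a matroid: the rank of its ground set. -/
noncomputable def rkM (M : Matroid α) : ℕ := rk M M.E

/-- The modular defect of a pair of sets:
`r(X) + r(Y) - r(X ∪ Y) - r(X ∩ Y)` (a natural number). -/
noncomputable def pairDefect (M : Matroid α) (X Y : Set α) : ℕ :=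
  rk M X + rk M Y - rk M (X ∪ Y) - rk M (X ∩ Y)

/-- A pair of sets is a modular pair if its modular defect is zero. -/
def ModularPair (M : Matroid α) (X Y : Set α) : Prop := pairDefect M X Y = 0

/-- A matroid is modular if every pair of flats is a modular pair. -/
def Modular (M : Matroid α) : Prop :=
  ∀ F L : Set α, M.IsFlat F → M.IsFlat L → ModularPair M F L

/-- A matroid (of rank at least 3) is hypermodular if every pair of flats of
rank `r(M) - 1` is a modular pair. -/
def Hypermodular (M : Matroid α) : Prop :=
  ∀ F L : Set α, M.IsFlat F → M.IsFlat L →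
    rk M F + 1 = rkM M → rk M L + 1 = rkM M → ModularPair M F L

/-- A modular cut of `M`: a collection of flats that is upward closed and
closed under intersections of modular pairs. -/
def ModularCut (M : Matroid α) (𝓜 : Set (Set α)) : Prop :=
  (∀ F ∈ 𝓜, M.IsFlat F) ∧
  (∀ L ∈ 𝓜, ∀ F : Set α, M.IsFlat F → L ⊆ F → F ∈ 𝓜) ∧
  (∀ F ∈ 𝓜, ∀ L ∈ 𝓜, ModularPair M F L → F ∩ L ∈ 𝓜)

/-- A principal modular cut: the collection of all flats containing some fixed flat. -/
def PrincipalCut (M : Matroid α) (𝓜 : Set (Set α)) : Prop :=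
  ∃ F : Set α, M.IsFlat F ∧ 𝓜 = {L | M.IsFlat L ∧ F ⊆ L}

/-- The modular cut generated by a collection `S` of flats:
the smallest modular cut containing `S`. -/
def genCut (M : Matroid α) (S : Set (Set α)) : Set (Set α) :=
  ⋂₀ {𝓜 | ModularCut M 𝓜 ∧ S ⊆ 𝓜}

/-- A Vámos line arrangement in a rank-4 matroid: four pairwise disjoint rank-2
flats, the union of any three of which has rank 4, with `r(T₀ ∪ T₁) = 3`,
`r(Tᵢ ∪ Lⱼ) = 3` for all `i, j`, and `r(L₀ ∪ L₁) = 4`. -/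
def VamosQuad (M : Matroid α) (T₀ T₁ L₀ L₁ : Set α) : Prop :=
  M.IsFlat T₀ ∧ M.IsFlat T₁ ∧ M.IsFlat L₀ ∧ M.IsFlat L₁ ∧
  rk M T₀ = 2 ∧ rk M T₁ = 2 ∧ rk M L₀ = 2 ∧ rk M L₁ = 2 ∧
  Disjoint T₀ T₁ ∧ Disjoint T₀ L₀ ∧ Disjoint T₀ L₁ ∧
  Disjoint T₁ L₀ ∧ Disjoint T₁ L₁ ∧ Disjoint L₀ L₁ ∧
  rk M (T₀ ∪ T₁ ∪ L₀) = 4 ∧ rk M (T₀ ∪ T₁ ∪ L₁) = 4 ∧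
  rk M (T₀ ∪ L₀ ∪ L₁) = 4 ∧ rk M (T₁ ∪ L₀ ∪ L₁) = 4 ∧
  rk M (T₀ ∪ T₁) = 3 ∧
  rk M (T₀ ∪ L₀) = 3 ∧ rk M (T₀ ∪ L₁) = 3 ∧
  rk M (T₁ ∪ L₀) = 3 ∧ rk M (T₁ ∪ L₁) = 3 ∧
  rk M (L₀ ∪ L₁) = 4

/-- The modular defect of a matroid: the sum of the modular defects of all
unordered pairs of flats (the sum over ordered pairs is twice this). -/
noncomputable def matroidDefect (M : Matroid α) : ℕ :=
  (∑ᶠ F ∈ {F | M.IsFlat F}, ∑ᶠ L ∈ {L | M.IsFlat L}, pairDefect M F L) / 2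

/-!
Looplessness makes a non-modular pair of lines, or of a hyperplane and a line, disjoint with
rank-deficient union. In rank 4, hypermodularity makes two distinct hyperplanes `F`, `H` a
modular pair meeting in a line, so every modular cut containing `F` and a line `L ⊆ H` contains
`F ∩ H`, and conversely: `{F, L}` and `{F ∩ H, L}` generate the same modular cut. From lines
`T, T'` take `H = cl(T ∪ T')` and `F = cl(T ∪ x)` for a point `x ∉ H`, so that `F ∩ H = T`;
from `F, L` take `H = cl(L ∪ x)` for a point `x ∈ F`.
-/

lemma _root_.Matroid.IsFlat.inter {M : Matroid α} {F G : Set α} (hF : M.IsFlat F)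
    (hG : M.IsFlat G) : M.IsFlat (F ∩ G) := by
  rw [isFlat_iff_closure_eq]
  refine (subset_inter ?_ ?_).antisymm
    (M.subset_closure _ (inter_subset_left.trans hF.subset_ground))
  · exact (M.closure_subset_closure inter_subset_left).trans hF.closure.subset
  · exact (M.closure_subset_closure inter_subset_right).trans hG.closure.subset

section Rank

variable {M : Matroid α} [M.RankFinite] {X Y F G : Set α} {e : α}

lemma cast_rk (X : Set α) : (rk M X : ℕ∞) = M.eRk X := by
  obtain ⟨J, hJ⟩ := M.exists_isBasis' X
  have hmax : IsGreatest {n | ∃ I, M.Indep I ∧ I ⊆ X ∧ I.ncard = n} J.ncard := by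
    refine ⟨⟨J, hJ.indep, hJ.subset, rfl⟩, ?_⟩
    rintro _ ⟨I, hI, hIX, rfl⟩
    have h := hI.encard_le_eRk_of_subset hIX
    rwa [← hJ.encard_eq_eRk, ← hI.finite.cast_ncard_eq, ← hJ.indep.finite.cast_ncard_eq,
      Nat.cast_le] at h
  rw [rk, hmax.csSup_eq, hJ.indep.finite.cast_ncard_eq, hJ.encard_eq_eRk]

lemma rk_mono (hXY : X ⊆ Y) : rk M X ≤ rk M Y := by
  have h := M.eRk_mono hXY
  rwa [← cast_rk, ← cast_rk, Nat.cast_le] at h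

lemma rk_le_rkM (X : Set α) : rk M X ≤ rkM M := by
  have h := M.eRk_le_eRank X
  rwa [← eRk_ground, ← cast_rk, ← cast_rk, Nat.cast_le] at h

lemma rk_closure (X : Set α) : rk M (M.closure X) = rk M X := by
  rw [← Nat.cast_inj (R := ℕ∞), cast_rk, cast_rk, eRk_closure_eq]

lemma rk_empty : rk M ∅ = 0 := by
  rw [← Nat.cast_inj (R := ℕ∞), cast_rk, eRk_empty, Nat.cast_zero]

lemma nonempty_of_rk_pos (h : 0 < rk M X) : X.Nonempty :=
  nonempty_iff_ne_empty.2 fun hX ↦ by rw [hX, rk_empty] at h; omega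

lemma rk_inter_add_rk_union_le (X Y : Set α) :
    rk M (X ∩ Y) + rk M (X ∪ Y) ≤ rk M X + rk M Y := by
  have h := M.eRk_inter_add_eRk_union_le X Y
  rwa [← cast_rk, ← cast_rk, ← cast_rk, ← cast_rk, ← Nat.cast_add, ← Nat.cast_add,
    Nat.cast_le] at h

lemma rk_insert_of_mem_diff_closure (he : e ∈ M.E \ M.closure X) :
    rk M (insert e X) = rk M X + 1 := by
  rw [← Nat.cast_inj (R := ℕ∞), cast_rk, Nat.cast_add, cast_rk, Nat.cast_one,
    eRk_insert_eq_add_one he]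

lemma rk_eq_zero_iff [M.Loopless] (hX : X ⊆ M.E) : rk M X = 0 ↔ X = ∅ := by
  rw [← Nat.cast_inj (R := ℕ∞), cast_rk, Nat.cast_zero, eRk_eq_zero_iff, loops_eq_empty,
    subset_empty_iff]

lemma _root_.Matroid.IsFlat.rk_lt_rk_union (hF : M.IsFlat F) (hX : X ⊆ M.E)
    (hXF : ¬ X ⊆ F) : rk M F < rk M (F ∪ X) := by
  refine (rk_mono subset_union_left).lt_of_ne fun h ↦ hXF ?_
  have hcl := (RankFinite.isRkFinite (M := M) F).closure_eq_closure_of_subset_of_eRk_ge_eRk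
    subset_union_left (by rw [← cast_rk, ← cast_rk, h])
  rw [hF.closure] at hcl
  exact subset_union_right.trans
    ((M.subset_closure _ (union_subset hF.subset_ground hX)).trans hcl.symm.subset)

lemma _root_.Matroid.IsFlat.eq_of_subset_of_rk_le (hF : M.IsFlat F) (hG : M.IsFlat G)
    (hFG : F ⊆ G) (h : rk M G ≤ rk M F) : F = G := by
  by_contra hne
  have := hF.rk_lt_rk_union hG.subset_ground fun hGF ↦ hne (hFG.antisymm hGF)
  rw [union_eq_right.2 hFG] at this
  omega

end Rank

section ModularPair

variable {M : Matroid α} {X Y F : Set α}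

lemma modularPair_iff_le :
    ModularPair M X Y ↔ rk M X + rk M Y ≤ rk M (X ∪ Y) + rk M (X ∩ Y) := by
  unfold ModularPair pairDefect
  omega

lemma modularPair_of_subset (hYX : Y ⊆ X) : ModularPair M X Y := by
  rw [modularPair_iff_le, union_eq_left.2 hYX, inter_eq_right.2 hYX]

lemma ModularPair.rk_inter_add_rk_union [M.RankFinite] (h : ModularPair M X Y) :
    rk M (X ∩ Y) + rk M (X ∪ Y) = rk M X + rk M Y := by
  have := rk_inter_add_rk_union_le (M := M) X Y
  rw [modularPair_iff_le] at h
  omega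

lemma not_modularPair_iff_of_disjoint [M.RankFinite] (h : Disjoint X Y) :
    ¬ ModularPair M X Y ↔ rk M (X ∪ Y) < rk M X + rk M Y := by
  rw [modularPair_iff_le, h.inter_eq, rk_empty, not_le, add_zero]

lemma _root_.Matroid.IsFlat.disjoint_of_not_modularPair [M.RankFinite] [M.Loopless]
    (hF : M.IsFlat F) (hX : X ⊆ M.E) (hrX : rk M X ≤ 2) (h : ¬ ModularPair M F X) :
    Disjoint F X := by
  have hXF : ¬ X ⊆ F := fun hXF ↦ h (modularPair_of_subset hXF)
  have hlt := hF.rk_lt_rk_union hX hXF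
  rw [modularPair_iff_le] at h
  rw [disjoint_iff_inter_eq_empty, ← rk_eq_zero_iff (inter_subset_right.trans hX)]
  omega

end ModularPair

section Hypermodular

variable {M : Matroid α} [M.RankFinite] {T T' F L H : Set α}

lemma Hypermodular.rk_inter_add_two (hM : Hypermodular M) (hF : M.IsFlat F) (hH : M.IsFlat H)
    (hrF : rk M F + 1 = rkM M) (hrH : rk M H + 1 = rkM M) (hFH : F ≠ H) :
    rk M (F ∩ H) + 2 = rkM M := by
  have hmod := (hM F H hF hH hrF hrH).rk_inter_add_rk_union
  have hHF : ¬ H ⊆ F := fun hHF ↦ hFH (hH.eq_of_subset_of_rk_le hF hHF (by omega)).symm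
  have := hF.rk_lt_rk_union hH.subset_ground hHF
  have := rk_le_rkM (M := M) (F ∪ H)
  omega

lemma Hypermodular.exists_rk_three_not_modularPair [M.Loopless] (hM : Hypermodular M)
    (hr : rkM M = 4) (hT : M.IsFlat T) (hT' : M.IsFlat T') (hrT : rk M T = 2)
    (hrT' : rk M T' = 2)
    (h : ¬ ModularPair M T T') :
    ∃ F H, M.IsFlat F ∧ M.IsFlat H ∧ rk M F = 3 ∧ rk M H = 3 ∧ T' ⊆ H ∧ F ∩ H = T ∧
      ¬ ModularPair M F T' := by
  have hdisj := hT.disjoint_of_not_modularPair hT'.subset_ground hrT'.le h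
  have hT'T : ¬ T' ⊆ T := fun hsub ↦ h (modularPair_of_subset hsub)
  have hgt := hT.rk_lt_rk_union hT'.subset_ground hT'T
  have hlt := (not_modularPair_iff_of_disjoint hdisj).1 h
  have hU : T ∪ T' ⊆ M.E := union_subset hT.subset_ground hT'.subset_ground
  set H := M.closure (T ∪ T')
  have hH : M.IsFlat H := isFlat_closure _
  have hrH : rk M H = 3 := by rw [rk_closure]; omega
  have hTH : T ⊆ H := subset_union_left.trans (M.subset_closure _ hU)
  have hT'H : T' ⊆ H := subset_union_right.trans (M.subset_closure _ hU)
  obtain ⟨x, hxE, hxH⟩ : (M.E \ H).Nonempty := by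
    rw [sdiff_nonempty]
    intro hEH
    have := rk_mono (M := M) hEH
    rw [← rkM] at this
    omega
  have hxT : x ∈ M.E \ M.closure T := ⟨hxE, by rw [hT.closure]; exact fun hx ↦ hxH (hTH hx)⟩
  set F := M.closure (insert x T)
  have hF : M.IsFlat F := isFlat_closure _
  have hrF : rk M F = 3 := by rw [rk_closure, rk_insert_of_mem_diff_closure hxT]; omega
  have hxF : x ∈ F := M.subset_closure _ (insert_subset hxE hT.subset_ground) (mem_insert _ _)
  have hTF : T ⊆ F := (subset_insert _ _).trans
    (M.subset_closure _ (insert_subset hxE hT.subset_ground))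
  have hFH : F ∩ H = T := by
    have h2 := hM.rk_inter_add_two hF hH (by omega) (by omega) fun hFH ↦ hxH (hFH ▸ hxF)
    exact (hT.eq_of_subset_of_rk_le (hF.inter hH) (subset_inter hTF hTH) (by omega)).symm
  have hFT' : Disjoint F T' := disjoint_left.2 fun y hyF hyT' ↦
    disjoint_left.1 hdisj (hFH ▸ ⟨hyF, hT'H hyT'⟩) hyT'
  refine ⟨F, H, hF, hH, hrF, hrH, hT'H, hFH, ?_⟩
  rw [not_modularPair_iff_of_disjoint hFT']
  have := rk_le_rkM (M := M) (F ∪ T')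
  omega

lemma Hypermodular.exists_rk_two_not_modularPair [M.Loopless] (hM : Hypermodular M)
    (hr : rkM M = 4) (hF : M.IsFlat F) (hL : M.IsFlat L) (hrF : rk M F = 3)
    (hrL : rk M L = 2)
    (h : ¬ ModularPair M F L) :
    ∃ H, M.IsFlat H ∧ rk M H = 3 ∧ L ⊆ H ∧ rk M (F ∩ H) = 2 ∧ ¬ ModularPair M (F ∩ H) L := by
  have hdisj := hF.disjoint_of_not_modularPair hL.subset_ground hrL.le h
  obtain ⟨x, hxF⟩ := nonempty_of_rk_pos (M := M) (X := F) (by omega)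
  have hxE := hF.subset_ground hxF
  have hxL : x ∈ M.E \ M.closure L :=
    ⟨hxE, by rw [hL.closure]; exact hdisj.notMem_of_mem_left hxF⟩
  set H := M.closure (insert x L)
  have hH : M.IsFlat H := isFlat_closure _
  have hrH : rk M H = 3 := by rw [rk_closure, rk_insert_of_mem_diff_closure hxL, hrL]
  have hLH : L ⊆ H :=
    (subset_insert _ _).trans (M.subset_closure _ (insert_subset hxE hL.subset_ground))
  have hFH : F ≠ H := fun hFH ↦ h (modularPair_of_subset (hFH ▸ hLH))
  have hrFH := hM.rk_inter_add_two hF hH (by omega) (by omega) hFH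
  refine ⟨H, hH, hrH, hLH, by omega, ?_⟩
  rw [not_modularPair_iff_of_disjoint (hdisj.mono_left inter_subset_left)]
  have := rk_mono (M := M) (union_subset inter_subset_right hLH : F ∩ H ∪ L ⊆ H)
  omega

end Hypermodular

section ModularCut

variable {M : Matroid α} {S 𝓝 : Set (Set α)} {F L H : Set α}

lemma subset_genCut (M : Matroid α) (S : Set (Set α)) : S ⊆ genCut M S :=
  fun _ hF ↦ mem_sInter.2 fun _ h ↦ h.2 hF

lemma ModularCut.genCut_subset_iff (h𝓝 : ModularCut M 𝓝) : genCut M S ⊆ 𝓝 ↔ S ⊆ 𝓝 :=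
  ⟨(subset_genCut M S).trans, fun hS ↦ sInter_subset_of_mem ⟨h𝓝, hS⟩⟩

lemma modularCut_setOf_isFlat (M : Matroid α) : ModularCut M {F | M.IsFlat F} :=
  ⟨fun _ h ↦ h, fun _ _ _ hF _ ↦ hF, fun _ hF _ hL _ ↦ hF.inter hL⟩

lemma modularCut_genCut (hS : ∀ F ∈ S, M.IsFlat F) : ModularCut M (genCut M S) := by
  refine ⟨fun F hF ↦ (modularCut_setOf_isFlat M).genCut_subset_iff.2 hS hF, ?_, ?_⟩
  · intro L hL F hF hLF
    exact mem_sInter.2 fun 𝓝 h𝓝 ↦ h𝓝.1.2.1 L (mem_sInter.1 hL 𝓝 h𝓝) F hF hLF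
  · intro F hF L hL hFL
    exact mem_sInter.2 fun 𝓝 h𝓝 ↦
      h𝓝.1.2.2 F (mem_sInter.1 hF 𝓝 h𝓝) L (mem_sInter.1 hL 𝓝 h𝓝) hFL

lemma genCut_inter_pair_eq (hF : M.IsFlat F) (hL : M.IsFlat L) (hH : M.IsFlat H) (hLH : L ⊆ H)
    (hFH : ModularPair M F H) : genCut M {F ∩ H, L} = genCut M {F, L} := by
  have hcut₁ : ModularCut M (genCut M {F ∩ H, L}) :=
    modularCut_genCut (by rintro _ (rfl | rfl); exacts [hF.inter hH, hL])
  have hcut₂ : ModularCut M (genCut M {F, L}) :=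
    modularCut_genCut (by rintro _ (rfl | rfl); exacts [hF, hL])
  have hL₂ : L ∈ genCut M {F, L} := subset_genCut _ _ (mem_insert_of_mem _ rfl)
  have hH₂ : H ∈ genCut M {F, L} := hcut₂.2.1 L hL₂ H hH hLH
  refine subset_antisymm (hcut₂.genCut_subset_iff.2 (pair_subset ?_ hL₂))
    (hcut₁.genCut_subset_iff.2 (pair_subset ?_ ?_))
  · exact hcut₂.2.2 F (subset_genCut _ _ (mem_insert _ _)) H hH₂ hFH
  · exact hcut₁.2.1 _ (subset_genCut _ _ (mem_insert _ _)) F hF inter_subset_left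
  · exact subset_genCut _ _ (mem_insert_of_mem _ rfl)

end ModularCut

theorem statement_9_general {α : Type*} (M : Matroid α) (hfin : M.E.Finite)
    (hrk : rkM M = 4) (hloopless : M.closure ∅ = ∅) (hhm : Hypermodular M)
    (𝓜 : Set (Set α)) (hcut : ModularCut M 𝓜) :
    (∀ T T' : Set α, T ∈ 𝓜 → T' ∈ 𝓜 → rk M T = 2 → rk M T' = 2 →
      ¬ ModularPair M T T' →
      ∃ F L : Set α, F ∈ 𝓜 ∧ L ∈ 𝓜 ∧ rk M F = 3 ∧ rk M L = 2 ∧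
        ¬ ModularPair M F L ∧ genCut M {F, L} = genCut M {T, T'}) ∧
    (∀ F L : Set α, F ∈ 𝓜 → L ∈ 𝓜 → rk M F = 3 → rk M L = 2 →
      ¬ ModularPair M F L →
      ∃ T T' : Set α, T ∈ 𝓜 ∧ T' ∈ 𝓜 ∧ rk M T = 2 ∧ rk M T' = 2 ∧
        ¬ ModularPair M T T' ∧ genCut M {T, T'} = genCut M {F, L}) := by
  have : M.Finite := ⟨hfin⟩
  have : M.Loopless := ⟨hloopless⟩
  refine ⟨fun T T' hT hT' hrT hrT' hTT' ↦ ?_, fun F L hF hL hrF hrL hFL ↦ ?_⟩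
  · obtain ⟨F, H, hFflat, hHflat, hrF, hrH, hT'H, hFH, hFT'⟩ :=
      hhm.exists_rk_three_not_modularPair hrk (hcut.1 T hT) (hcut.1 T' hT') hrT hrT' hTT'
    have hFHmod := hhm F H hFflat hHflat (by omega) (by omega)
    refine ⟨F, T', hcut.2.1 T hT F hFflat (hFH ▸ inter_subset_left), hT', hrF, hrT', hFT', ?_⟩
    rw [← genCut_inter_pair_eq hFflat (hcut.1 T' hT') hHflat hT'H hFHmod, hFH]
  · obtain ⟨H, hHflat, hrH, hLH, hrFH, hFHL⟩ :=
      hhm.exists_rk_two_not_modularPair hrk (hcut.1 F hF) (hcut.1 L hL) hrF hrL hFL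
    have hFHmod := hhm F H (hcut.1 F hF) hHflat (by omega) (by omega)
    exact ⟨F ∩ H, L, hcut.2.2 F hF H (hcut.2.1 L hL H hHflat hLH) hFHmod, hL, hrFH, hrL, hFHL,
      genCut_inter_pair_eq (hcut.1 F hF) (hcut.1 L hL) hHflat hLH hFHmod⟩

/-- Let M be a finite rank-4 loopless hypermodular non-modular
matroid and 𝓜 a modular cut. If 𝓜 contains a non-modular pair of rank-2 flats,
it contains a non-modular pair of flats of ranks 3 and 2 generating the same
modular cut; and conversely. -/
theorem statement_9 {α : Type*} (M : Matroid α) (hfin : M.E.Finite)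
    (hrk : rkM M = 4) (hloopless : M.closure ∅ = ∅) (hhm : Hypermodular M)
    (hnonmod : ¬ Modular M)
    (𝓜 : Set (Set α)) (hcut : ModularCut M 𝓜) :
    (∀ T T' : Set α, T ∈ 𝓜 → T' ∈ 𝓜 → rk M T = 2 → rk M T' = 2 →
      ¬ ModularPair M T T' →
      ∃ F L : Set α, F ∈ 𝓜 ∧ L ∈ 𝓜 ∧ rk M F = 3 ∧ rk M L = 2 ∧
        ¬ ModularPair M F L ∧ genCut M {F, L} = genCut M {T, T'}) ∧
    (∀ F L : Set α, F ∈ 𝓜 → L ∈ 𝓜 → rk M F = 3 → rk M L = 2 →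
      ¬ ModularPair M F L →
      ∃ T T' : Set α, T ∈ 𝓜 ∧ T' ∈ 𝓜 ∧ rk M T = 2 ∧ rk M T' = 2 ∧
        ¬ ModularPair M T T' ∧ genCut M {T, T'} = genCut M {F, L}) :=
  statement_9_general M hfin hrk hloopless hhm 𝓜 hcut

end SMC
end

section
/- Let M be a finite rank-4 matroid and let T₁, T₂, T₃ be rank-2 flats of M with r(T₁∪T₂∪T₃) = 4 and r(Tᵢ∪Tⱼ) = 3 for all i ≠ j. If cl(T₁∪T₂) ∩ T₃ ≠ ∅, then cl(T₁∪T₂) ∩ T₃ ⊆ T₁ and cl(T₁∪T₂) ∩ T₃ ⊆ T₂. -/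
open Set Matroid
open scoped Matroid

namespace SMC

variable {α : Type*}

/-!
If some `x ∈ cl(T₁ ∪ T₂) ∩ T₃` lay outside the flat `T₁`, then `T₁ + x` would have rank
`r(T₁) + 1 = r(T₁ ∪ T₃)` and so would span `T₃`; as `T₁ + x ⊆ cl(T₁ ∪ T₂)`, all of
`T₁ ∪ T₂ ∪ T₃` would then lie in the rank-3 flat `cl(T₁ ∪ T₂)`. The same argument applies to `T₂`.
-/

-- Both sides are `0` on sets of infinite rank, so a nonzero value of `rk` forces finite rank.
lemma rk_eq_toNat_eRk (M : Matroid α) (X : Set α) : rk M X = (M.eRk X).toNat := by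
  have hset : {n | ∃ I, M.Indep I ∧ I ⊆ X ∧ I.ncard = n} = {n : ℕ | (n : ℕ∞) ≤ M.eRk X} := by
    ext n
    refine ⟨?_, fun hn ↦ ?_⟩
    · rintro ⟨I, hI, hIX, rfl⟩
      exact I.ncard_le_encard.trans (hI.encard_le_eRk_of_subset hIX)
    · obtain ⟨I, hIX, hI, hIn⟩ := le_eRk_iff.1 hn
      exact ⟨I, hI, hIX, by rw [ncard_def, hIn, ENat.toNat_natCast]⟩
  rw [rk, hset]
  cases M.eRk X using ENat.recTopCoe with
  | top => simp
  | coe m => simp only [Nat.cast_le, ENat.toNat_natCast]; exact csSup_Iic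

lemma eRk_eq_of_rk_eq {M : Matroid α} {X : Set α} {n : ℕ} [NeZero n] (h : rk M X = n) :
    M.eRk X = n := by
  rwa [rk_eq_toNat_eRk, ENat.toNat_eq_iff_eq_natCast] at h

lemma closure_union_inter_subset_closure {M : Matroid α} {T₁ T₂ T₃ : Set α}
    (hT₁ : M.IsRkFinite T₁) (h₁₃ : M.eRk (T₁ ∪ T₃) ≤ M.eRk T₁ + 1)
    (hlt : M.eRk (T₁ ∪ T₂) < M.eRk (T₁ ∪ T₂ ∪ T₃)) :
    M.closure (T₁ ∪ T₂) ∩ T₃ ⊆ M.closure T₁ := by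
  rintro x ⟨hx₁₂, hx₃⟩
  by_contra hx₁
  have hxE : x ∈ M.E := M.closure_subset_ground _ hx₁₂
  have hspan : M.closure (insert x T₁) = M.closure (T₁ ∪ T₃) :=
    (hT₁.insert x).closure_eq_closure_of_subset_of_eRk_ge_eRk
      (insert_subset (Or.inr hx₃) subset_union_left)
      (by rwa [eRk_insert_eq_add_one ⟨hxE, hx₁⟩])
  have hsub : M.closure (T₁ ∪ T₃) ⊆ M.closure (T₁ ∪ T₂) := by
    rw [← hspan, ← M.closure_insert_closure_eq_closure_insert]
    exact M.closure_subset_closure_of_subset_closure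
      (insert_subset hx₁₂ (M.closure_subset_closure subset_union_left))
  refine hlt.not_ge ?_
  calc M.eRk (T₁ ∪ T₂ ∪ T₃) ≤ M.eRk ((T₁ ∪ T₂) ∪ M.closure (T₁ ∪ T₃)) := by
        rw [eRk_union_closure_right_eq]
        exact M.eRk_mono (union_subset_union_right _ subset_union_right)
    _ ≤ M.eRk ((T₁ ∪ T₂) ∪ M.closure (T₁ ∪ T₂)) := M.eRk_mono (union_subset_union_right _ hsub)
    _ = M.eRk (T₁ ∪ T₂) := by rw [eRk_union_closure_right_eq, union_self]

theorem statement_12_general {α : Type*} (M : Matroid α) (T₁ T₂ T₃ : Set α)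
    (h₁ : M.IsFlat T₁) (h₂ : M.IsFlat T₂)
    (hr₁ : rk M T₁ = 2) (hr₂ : rk M T₂ = 2)
    (hall : rk M (T₁ ∪ T₂ ∪ T₃) = 4)
    (h₁₂ : rk M (T₁ ∪ T₂) = 3) (h₁₃ : rk M (T₁ ∪ T₃) = 3)
    (h₂₃ : rk M (T₂ ∪ T₃) = 3) :
    M.closure (T₁ ∪ T₂) ∩ T₃ ⊆ T₁ ∧ M.closure (T₁ ∪ T₂) ∩ T₃ ⊆ T₂ := by
  replace hr₁ := eRk_eq_of_rk_eq hr₁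
  replace hr₂ := eRk_eq_of_rk_eq hr₂
  replace hall := eRk_eq_of_rk_eq hall
  replace h₁₂ := eRk_eq_of_rk_eq h₁₂
  replace h₁₃ := eRk_eq_of_rk_eq h₁₃
  replace h₂₃ := eRk_eq_of_rk_eq h₂₃
  have hlt : M.eRk (T₁ ∪ T₂) < M.eRk (T₁ ∪ T₂ ∪ T₃) := by rw [h₁₂, hall]; norm_num
  have hfin₁ : M.IsRkFinite T₁ := eRk_ne_top_iff.1 (by simp [hr₁])
  have hfin₂ : M.IsRkFinite T₂ := eRk_ne_top_iff.1 (by simp [hr₂])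
  constructor
  · simpa only [h₁.closure] using
      closure_union_inter_subset_closure hfin₁ (by rw [h₁₃, hr₁]; rfl) hlt
  · simpa only [h₂.closure, union_comm T₂] using
      closure_union_inter_subset_closure hfin₂ (by rw [h₂₃, hr₂]; rfl)
        (by rwa [union_comm T₂])

/-- In a finite rank-4 matroid, if T₁, T₂, T₃ are rank-2 flats
with r(T₁ ∪ T₂ ∪ T₃) = 4 and r(Tᵢ ∪ Tⱼ) = 3 for i ≠ j, and
cl(T₁ ∪ T₂) ∩ T₃ ≠ ∅, then cl(T₁ ∪ T₂) ∩ T₃ ⊆ T₁ and cl(T₁ ∪ T₂) ∩ T₃ ⊆ T₂. -/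
theorem statement_12 {α : Type*} (M : Matroid α) (hfin : M.E.Finite)
    (hrk : rkM M = 4) (T₁ T₂ T₃ : Set α)
    (h₁ : M.IsFlat T₁) (h₂ : M.IsFlat T₂) (h₃ : M.IsFlat T₃)
    (hr₁ : rk M T₁ = 2) (hr₂ : rk M T₂ = 2) (hr₃ : rk M T₃ = 2)
    (hall : rk M (T₁ ∪ T₂ ∪ T₃) = 4)
    (h₁₂ : rk M (T₁ ∪ T₂) = 3) (h₁₃ : rk M (T₁ ∪ T₃) = 3)
    (h₂₃ : rk M (T₂ ∪ T₃) = 3)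
    (hne : (M.closure (T₁ ∪ T₂) ∩ T₃).Nonempty) :
    M.closure (T₁ ∪ T₂) ∩ T₃ ⊆ T₁ ∧ M.closure (T₁ ∪ T₂) ∩ T₃ ⊆ T₂ :=
  statement_12_general M T₁ T₂ T₃ h₁ h₂ hr₁ hr₂ hall h₁₂ h₁₃ h₂₃

end SMC
end

section
/- Let M be a finite hypermodular matroid of rank ≥ 3 and let F be a flat of M with r(M) − r(F) ≥ 3. Then the contraction M/F is a hypermodular matroid. -/
open Set Matroid
open scoped Matroid

namespace SMC

variable {α : Type*}

/-- The contraction M/C of a matroid, defined via duality and restriction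
(deletion): M/C = (M* \ C)*. -/
noncomputable def contractBy (M : Matroid α) (C : Set α) : Matroid α :=
  (M✶ ↾ (M.E \ C))✶

/-!
Contracting a flat `F` matches the hyperplanes of `M ／ F` with the hyperplanes of `M` that
contain `F` (via `H ↦ H ∪ F`), and shifts every rank by `r(F)`, since
`r_{M／F}(X) = r_M(X ∪ F) - r_M(F)`. The shift cancels in the modular defect, so a modular pair
of hyperplanes of `M` gives a modular pair of hyperplanes of `M ／ F`.
-/

lemma contractBy_eq_contract (M : Matroid α) (C : Set α) : contractBy M C = M ／ C := rfl

section Rank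

variable {M : Matroid α} {A B C X : Set α}

lemma cast_rk_eq_eRk [M.RankFinite] (X : Set α) : (rk M X : ℕ∞) = M.eRk X := by
  obtain ⟨I, hI⟩ := M.exists_isBasis' X
  have hIfin : I.Finite := hI.indep.finite
  have hle : ∀ n ∈ {n | ∃ J, M.Indep J ∧ J ⊆ X ∧ J.ncard = n}, n ≤ I.ncard := by
    rintro _ ⟨J, hJ, hJX, rfl⟩
    rw [← Nat.cast_le (α := ℕ∞), hJ.finite.cast_ncard_eq, hIfin.cast_ncard_eq,
      hI.encard_eq_eRk]
    exact hJ.encard_le_eRk_of_subset hJX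
  have hrk : rk M X = I.ncard :=
    le_antisymm (csSup_le ⟨_, I, hI.indep, hI.subset, rfl⟩ hle)
      (le_csSup ⟨_, hle⟩ ⟨I, hI.indep, hI.subset, rfl⟩)
  rw [hrk, hIfin.cast_ncard_eq, hI.encard_eq_eRk]

lemma eRk_contract_add_eRk (M : Matroid α) (hXC : Disjoint X C) :
    (M ／ C).eRk X + M.eRk C = M.eRk (X ∪ C) := by
  obtain ⟨J, hJ⟩ := M.exists_isBasis' C
  obtain ⟨K, hK, hJK⟩ := hJ.indep.subset_isBasis'_of_subset (hJ.subset.trans subset_union_right)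
  have hKC : K ∩ C = J :=
    (hJ.eq_of_subset_indep (hK.indep.inter_right C) (subset_inter hJK hJ.subset)
      inter_subset_right).symm
  have hbasis : (M ／ C).IsBasis' (K \ C) X := by
    have h := hK.contract_isBasis' hJ (hK.indep.subset (union_subset sdiff_subset hJK))
    rwa [union_sdiff_right, hXC.sdiff_eq_left] at h
  rw [← hbasis.encard_eq_eRk, ← hJ.encard_eq_eRk, ← hK.encard_eq_eRk, ← hKC,
    encard_sdiff_add_encard_inter]

lemma rk_contract_add_rk [M.RankFinite] (hXC : Disjoint X C) :
    rk (M ／ C) X + rk M C = rk M (X ∪ C) := by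
  have h := eRk_contract_add_eRk M hXC
  rw [← cast_rk_eq_eRk, ← cast_rk_eq_eRk, ← cast_rk_eq_eRk] at h
  exact_mod_cast h

lemma rkM_contract_add_rk [M.RankFinite] (hC : C ⊆ M.E) :
    rkM (M ／ C) + rk M C = rkM M := by
  rw [rkM, rkM, contract_ground, rk_contract_add_rk disjoint_sdiff_left, sdiff_union_of_subset hC]

lemma pairDefect_contract [M.RankFinite] (hAC : Disjoint A C) (hBC : Disjoint B C) :
    pairDefect (M ／ C) A B = pairDefect M (A ∪ C) (B ∪ C) := by
  have hA := rk_contract_add_rk (M := M) hAC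
  have hB := rk_contract_add_rk (M := M) hBC
  have hAB := rk_contract_add_rk (M := M) (disjoint_union_left.mpr ⟨hAC, hBC⟩)
  have hAiB := rk_contract_add_rk (M := M) (hAC.mono_left (inter_subset_left (t := B)))
  rw [union_union_distrib_right] at hAB
  rw [inter_union_distrib_right] at hAiB
  unfold pairDefect
  omega

end Rank

lemma _root_.Matroid.IsFlat.union_of_contract {M : Matroid α} {A C : Set α}
    (hA : (M ／ C).IsFlat A) (hC : C ⊆ M.E) : M.IsFlat (A ∪ C) := by
  have hAE : A ⊆ M.E := hA.subset_ground.trans sdiff_subset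
  refine isFlat_iff_closure_eq.mpr <| (M.subset_closure _ (union_subset hAE hC)).antisymm' ?_
  have hcl := hA.closure
  rw [contract_closure_eq] at hcl
  intro e he
  by_cases heC : e ∈ C
  · exact Or.inr heC
  · exact Or.inl (hcl ▸ ⟨he, heC⟩)

lemma Hypermodular.contract {M : Matroid α} [M.RankFinite] (hM : Hypermodular M) {C : Set α}
    (hC : C ⊆ M.E) : Hypermodular (M ／ C) := by
  intro A B hA hB hrA hrB
  have hAC : Disjoint A C := (subset_sdiff.mp hA.subset_ground).2
  have hBC : Disjoint B C := (subset_sdiff.mp hB.subset_ground).2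
  have hrank := rkM_contract_add_rk (M := M) hC
  have hrA' := rk_contract_add_rk (M := M) hAC
  have hrB' := rk_contract_add_rk (M := M) hBC
  rw [ModularPair, pairDefect_contract hAC hBC]
  exact hM _ _ (hA.union_of_contract hC) (hB.union_of_contract hC) (by omega) (by omega)

theorem statement_13_general {α : Type*} (M : Matroid α) (hfin : M.E.Finite)
    (hhm : Hypermodular M)
    (F : Set α) (hF : M.IsFlat F) (hcorank : rk M F + 3 ≤ rkM M) :
    3 ≤ rkM (contractBy M F) ∧ Hypermodular (contractBy M F) := by
  have : M.Finite := ⟨hfin⟩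
  have hrank := rkM_contract_add_rk (M := M) hF.subset_ground
  rw [contractBy_eq_contract]
  exact ⟨by omega, hhm.contract hF.subset_ground⟩

/-- Let M be a finite hypermodular matroid of rank ≥ 3 and F
a flat of corank ≥ 3. Then the contraction M/F is a hypermodular matroid. -/
theorem statement_13 {α : Type*} (M : Matroid α) (hfin : M.E.Finite)
    (hrk : 3 ≤ rkM M) (hhm : Hypermodular M)
    (F : Set α) (hF : M.IsFlat F) (hcorank : rk M F + 3 ≤ rkM M) :
    3 ≤ rkM (contractBy M F) ∧ Hypermodular (contractBy M F) :=
  statement_13_general M hfin hhm F hF hcorank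

end SMC
end
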